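/- arXiv:2207.06452 — 6 statements merged into one kernel-verified Lean document; each statement's English description precedes it below -/
import Mathlib

section
/- Let f : ℝⁿ → ℝ be differentiable with L_g-Lipschitz continuous gradient, Q ∈ ℝ^{n×p} with ‖Q‖ ≤ Q_max, x ∈ ℝⁿ, and define f̂(s) = f(x + Q s). Let δ > 0, c₁ ≥ 1, and let s₀ = 0, s₁, ..., s_p ∈ ℝᵖ be affinely independent points with ‖sᵢ‖ ≤ c₁ δ for all i. Set ρ = max_i ‖sᵢ − s₀‖ and L̂ = (1/ρ)[s₁ − s₀, ..., s_p − s₀] ∈ ℝ^{p×p} (which is invertible). Let κ'_eg = (1/2) c₁ L_g Q_max², and let y₀, y₁, ..., y_p ∈ ℝ satisfy | yᵢ − f̂(sᵢ) | ≤ (1/2) κ'_eg ρ min{δ, δ²} for all i. Let (a₀, a) ∈ ℝ × ℝᵖ be the unique solution of the interpolation conditions a₀ + aᵀ sᵢ = yᵢ for i = 0, 1, ..., p. Then for all s ∈ ℝᵖ with ‖s‖ ≤ δ, ‖∇f̂(s) − a‖ ≤ (1 + c₁ √p ‖L̂⁻¹‖) L_g Q_max² δ, where ∇f̂(s) = Qᵀ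 ∇f(x + Q s). -/
open MeasureTheory Matrix
open scoped RealInnerProductSpace

/-- The operator norm of a real matrix with respect to Euclidean norms
(a norm consistent with the Euclidean norm). -/
noncomputable def matOpNorm {n p : ℕ} (Q : Matrix (Fin n) (Fin p) ℝ) : ℝ :=
  ‖LinearMap.toContinuousLinearMap (Matrix.toEuclideanLin Q)‖

lemma taylor_half {F : Type*} [NormedAddCommGroup F] [InnerProductSpace ℝ F] [CompleteSpace F]
    (f : F → ℝ) (hf : Differentiable ℝ f) (L : ℝ) (hL : 0 ≤ L)
    (hlip : ∀ y z : F, ‖gradient f y - gradient f z‖ ≤ L * ‖y - z‖)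
    (a b : F) : |f b - f a - ⟪gradient f a, b - a⟫| ≤ L / 2 * ‖b - a‖ ^ 2 := by
  set v := b - a with hv
  have hcont : Continuous (gradient f) := by
    have : LipschitzWith (Real.toNNReal L) (gradient f) := by
      apply LipschitzWith.of_dist_le_mul
      intro y z
      simpa [dist_eq_norm, Real.coe_toNNReal L hL] using hlip y z
    exact this.continuous
  have hderiv : ∀ t : ℝ, HasDerivAt (fun t : ℝ => f (a + t • v))
      ⟪gradient f (a + t • v), v⟫ t := by
    intro t
    have h1 : HasDerivAt (fun t : ℝ => a + t • v) v t := by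
      simpa using ((hasDerivAt_id t).smul_const v).const_add a
    have h2 : HasFDerivAt f ((InnerProductSpace.toDual ℝ F) (gradient f (a + t • v)))
        (a + t • v) := (hf _).hasGradientAt
    have h3 := h2.comp_hasDerivAt t h1
    have h4 : ⟪gradient f (a + t • v), v⟫ = (InnerProductSpace.toDual ℝ F) (gradient f (a + t • v)) v := by simp
    rw [h4]; exact h3
  have hc : Continuous fun t : ℝ => ⟪gradient f (a + t • v), v⟫ :=
    Continuous.inner (hcont.comp (by continuity)) continuous_const
  have key : ∫ t in (0:ℝ)..1, ⟪gradient f (a + t • v), v⟫ = f (a + (1:ℝ) • v) - f (a + (0:ℝ) • v) := by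
    exact intervalIntegral.integral_eq_sub_of_hasDerivAt (fun t _ => hderiv t)
      (hc.intervalIntegrable 0 1)
  have key2 : f b - f a - ⟪gradient f a, v⟫
      = ∫ t in (0:ℝ)..1, (⟪gradient f (a + t • v), v⟫ - ⟪gradient f a, v⟫) := by
    rw [intervalIntegral.integral_sub (hc.intervalIntegrable 0 1) intervalIntegrable_const]
    rw [key]
    simp [hv]
  rw [key2]
  have hb : ∀ t ∈ Set.Ioc (0:ℝ) 1, ‖⟪gradient f (a + t • v), v⟫ - ⟪gradient f a, v⟫‖
      ≤ L * ‖v‖ ^ 2 * t := by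
    intro t ht
    rw [← inner_sub_left]
    calc ‖⟪gradient f (a + t • v) - gradient f a, v⟫‖
        ≤ ‖gradient f (a + t • v) - gradient f a‖ * ‖v‖ := by
          simpa using abs_real_inner_le_norm _ v
      _ ≤ (L * ‖(a + t • v) - a‖) * ‖v‖ := by
          gcongr; exact hlip _ _
      _ = L * ‖v‖ ^ 2 * t := by
          rw [add_sub_cancel_left, norm_smul]
          simp [abs_of_pos ht.1]
          ring
  have hae : ∀ᵐ (t : ℝ) ∂(MeasureTheory.volume.restrict (Set.uIoc (0:ℝ) 1)),
      ‖⟪gradient f (a + t • v), v⟫ - ⟪gradient f a, v⟫‖ ≤ L * ‖v‖ ^ 2 * t := by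
    filter_upwards [MeasureTheory.ae_restrict_mem measurableSet_uIoc] with t ht
    have ht' : t ∈ Set.Ioc (0:ℝ) 1 := by
      simpa [Set.uIoc_of_le (zero_le_one)] using ht
    exact hb t ht'
  have hgint : IntervalIntegrable (fun t => L * ‖v‖ ^ 2 * t) MeasureTheory.volume 0 1 :=
    Continuous.intervalIntegrable (by continuity) 0 1
  have hbound := intervalIntegral.norm_integral_le_abs_of_norm_le hae hgint
  have hIg : (∫ t in (0:ℝ)..1, L * ‖v‖ ^ 2 * t) = L / 2 * ‖v‖ ^ 2 := by
    rw [intervalIntegral.integral_const_mul, integral_id]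
    ring
  calc |∫ t in (0:ℝ)..1, (⟪gradient f (a + t • v), v⟫ - ⟪gradient f a, v⟫)|
      ≤ |∫ t in (0:ℝ)..1, L * ‖v‖ ^ 2 * t| := hbound
    _ = L / 2 * ‖v‖ ^ 2 := by
        rw [hIg]; exact abs_of_nonneg (by positivity)

lemma matOpNorm_apply_le {m k : ℕ} (M : Matrix (Fin m) (Fin k) ℝ) (v : EuclideanSpace ℝ (Fin k)) :
    ‖Matrix.toEuclideanLin M v‖ ≤ matOpNorm M * ‖v‖ := by
  simpa [matOpNorm] using
    (LinearMap.toContinuousLinearMap (Matrix.toEuclideanLin M)).le_opNorm v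

lemma matOpNorm_nonneg {m k : ℕ} (M : Matrix (Fin m) (Fin k) ℝ) : 0 ≤ matOpNorm M :=
  norm_nonneg _

lemma matOpNorm_transpose {m k : ℕ} (M : Matrix (Fin m) (Fin k) ℝ) :
    matOpNorm Mᵀ = matOpNorm M := by
  have h : Matrix.toEuclideanLin Mᵀ = LinearMap.adjoint (Matrix.toEuclideanLin M) := by
    rw [← Matrix.conjTranspose_eq_transpose_of_trivial,
      Matrix.toEuclideanLin_conjTranspose_eq_adjoint]
  rw [matOpNorm, matOpNorm, h, LinearMap.adjoint_toContinuousLinearMap]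
  exact LinearIsometryEquiv.norm_map ContinuousLinearMap.adjoint _

set_option maxHeartbeats 1000000 in
/-- **Part 1 of Theorem 3.11 (gradient accuracy of the interpolation model).** -/
theorem stmt_5 {n p : ℕ} (hp : 0 < p)
    (f : EuclideanSpace ℝ (Fin n) → ℝ) (hf : Differentiable ℝ f) (Lg : ℝ)
    (hlip : ∀ y z : EuclideanSpace ℝ (Fin n),
      ‖gradient f y - gradient f z‖ ≤ Lg * ‖y - z‖)
    (Q : Matrix (Fin n) (Fin p) ℝ) (Qmax : ℝ) (hQmaxpos : 0 < Qmax)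
    (hQ : matOpNorm Q ≤ Qmax)
    (x : EuclideanSpace ℝ (Fin n))
    (δ c₁ : ℝ) (hδ : 0 < δ) (hc₁ : 1 ≤ c₁)
    -- the interpolation points s₀ = 0, s₁, …, s_p
    (s : Fin (p + 1) → EuclideanSpace ℝ (Fin p)) (hs0 : s 0 = 0)
    (haffind : LinearIndependent ℝ (fun i : Fin p => s i.succ - s 0))
    (hsball : ∀ i, ‖s i‖ ≤ c₁ * δ)
    (ρ : ℝ) (hρub : ∀ i, ‖s i - s 0‖ ≤ ρ) (hρmax : ∃ i, ‖s i - s 0‖ = ρ)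
    -- the matrix L̂ = (1/ρ)[s₁ - s₀, …, s_p - s₀]
    (Lhat : Matrix (Fin p) (Fin p) ℝ)
    (hLhat : Lhat = Matrix.of fun a b : Fin p => (s b.succ - s 0) a / ρ)
    -- the function values, accurate up to (1/2) κ'_eg ρ min{δ, δ²}
    (y : Fin (p + 1) → ℝ)
    (hy : ∀ i, |y i - f (x + Matrix.toEuclideanLin Q (s i))|
      ≤ 1 / 2 * (1 / 2 * c₁ * Lg * Qmax ^ 2) * ρ * min δ (δ ^ 2))
    -- the interpolation model
    (a₀ : ℝ) (a : EuclideanSpace ℝ (Fin p))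
    (hinterp : ∀ i, a₀ + ⟪a, s i⟫ = y i) :
    ∀ t : EuclideanSpace ℝ (Fin p), ‖t‖ ≤ δ →
    ‖Matrix.toEuclideanLin Qᵀ (gradient f (x + Matrix.toEuclideanLin Q t)) - a‖
      ≤ (1 + c₁ * Real.sqrt p * matOpNorm Lhat⁻¹) * Lg * Qmax ^ 2 * δ := by
  intro t ht
  set QL := Matrix.toEuclideanLin Q with hQL
  have hc₁0 : (0:ℝ) < c₁ := lt_of_lt_of_le one_pos hc₁
  -- ρ is positive
  have hρ0 : 0 < ρ := by
    have hne := haffind.ne_zero ⟨0, hp⟩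
    have h1 : 0 < ‖s (⟨0, hp⟩ : Fin p).succ - s 0‖ := norm_pos_iff.mpr hne
    exact lt_of_lt_of_le h1 (hρub _)
  have hminpos : 0 < min δ (δ ^ 2) := lt_min hδ (pow_pos hδ 2)
  -- Lg is nonnegative
  have hLg0 : 0 ≤ Lg := by
    have h0 := (abs_nonneg _).trans (hy 0)
    nlinarith [mul_pos (mul_pos (mul_pos hc₁0 (pow_pos hQmaxpos 2)) hρ0) hminpos]
  -- adjoint identity
  have hadj : Matrix.toEuclideanLin Qᵀ = LinearMap.adjoint QL := by
    rw [hQL, ← Matrix.conjTranspose_eq_transpose_of_trivial,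
      Matrix.toEuclideanLin_conjTranspose_eq_adjoint]
  have hinner : ∀ (u : EuclideanSpace ℝ (Fin n)) (v : EuclideanSpace ℝ (Fin p)),
      ⟪Matrix.toEuclideanLin Qᵀ u, v⟫ = ⟪u, QL v⟫ := by
    intro u v; rw [hadj]; exact LinearMap.adjoint_inner_left _ _ _
  have hQv : ∀ v : EuclideanSpace ℝ (Fin p), ‖QL v‖ ≤ Qmax * ‖v‖ := fun v =>
    (matOpNorm_apply_le Q v).trans (mul_le_mul_of_nonneg_right hQ (norm_nonneg v))
  have hQtv : ∀ u : EuclideanSpace ℝ (Fin n), ‖Matrix.toEuclideanLin Qᵀ u‖ ≤ Qmax * ‖u‖ := by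
    intro u
    refine (matOpNorm_apply_le Qᵀ u).trans ?_
    rw [matOpNorm_transpose]
    exact mul_le_mul_of_nonneg_right hQ (norm_nonneg u)
  set w : EuclideanSpace ℝ (Fin p) := Matrix.toEuclideanLin Qᵀ (gradient f x) - a with hw
  have hfx0 : f (x + QL (s 0)) = f x := by rw [hs0]; simp
  have ha₀ : a₀ = y 0 := by
    have := hinterp 0
    rw [hs0] at this
    simpa using this
  -- the key inner-product bound
  have hkey : ∀ b : Fin p, |⟪w, s b.succ⟫| ≤ c₁ * (Lg * Qmax ^ 2) * ρ * δ := by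
    intro b
    set i := b.succ with hi
    have hT := taylor_half f hf Lg hLg0 hlip x (x + QL (s i))
    rw [add_sub_cancel_left] at hT
    have herr_i := hy i
    have herr_0 := hy 0
    rw [hfx0] at herr_0
    have hAi : ⟪a, s i⟫ = y i - y 0 := by
      have h1 := hinterp i
      rw [ha₀] at h1
      linarith
    have hwi : ⟪w, s i⟫ = ⟪gradient f x, QL (s i)⟫ - (y i - y 0) := by
      rw [hw, inner_sub_left, hinner, hAi]
    have hsiρ : ‖s i‖ ≤ ρ := by
      have := hρub i
      rwa [hs0, sub_zero] at this
    have hsic : ‖s i‖ ≤ c₁ * δ := hsball i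
    have hQsi : ‖QL (s i)‖ ≤ Qmax * ‖s i‖ := hQv (s i)
    have hQsi2 : ‖QL (s i)‖ ^ 2 ≤ Qmax ^ 2 * (ρ * (c₁ * δ)) := by
      have hA : ‖QL (s i)‖ ^ 2 ≤ (Qmax * ‖s i‖) ^ 2 :=
        pow_le_pow_left₀ (norm_nonneg _) hQsi 2
      have hB : ‖s i‖ ^ 2 ≤ ρ * (c₁ * δ) := by
        have h2 := mul_le_mul hsiρ hsic (norm_nonneg _) ((norm_nonneg _).trans hsiρ)
        calc ‖s i‖ ^ 2 = ‖s i‖ * ‖s i‖ := by ring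
          _ ≤ ρ * (c₁ * δ) := h2
      calc ‖QL (s i)‖ ^ 2 ≤ (Qmax * ‖s i‖) ^ 2 := hA
        _ = Qmax ^ 2 * ‖s i‖ ^ 2 := by ring
        _ ≤ Qmax ^ 2 * (ρ * (c₁ * δ)) := mul_le_mul_of_nonneg_left hB (sq_nonneg _)
    have hmin : min δ (δ ^ 2) ≤ δ := min_le_left _ _
    have hcoef : 0 ≤ 1 / 2 * (1 / 2 * c₁ * Lg * Qmax ^ 2) * ρ := by positivity
    have hmin' : 1 / 2 * (1 / 2 * c₁ * Lg * Qmax ^ 2) * ρ * min δ (δ ^ 2)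
        ≤ 1 / 2 * (1 / 2 * c₁ * Lg * Qmax ^ 2) * ρ * δ :=
      mul_le_mul_of_nonneg_left hmin hcoef
    have herr_i' : |y i - f (x + QL (s i))| ≤ 1 / 2 * (1 / 2 * c₁ * Lg * Qmax ^ 2) * ρ * δ :=
      herr_i.trans hmin'
    have herr_0' : |y 0 - f x| ≤ 1 / 2 * (1 / 2 * c₁ * Lg * Qmax ^ 2) * ρ * δ :=
      herr_0.trans hmin'
    have hdecomp : ⟪w, s i⟫ =
        -(f (x + QL (s i)) - f x - ⟪gradient f x, QL (s i)⟫)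
        - (y i - f (x + QL (s i))) + (y 0 - f x) := by
      rw [hwi]; ring
    rw [hdecomp]
    have h1 : |f (x + QL (s i)) - f x - ⟪gradient f x, QL (s i)⟫|
        ≤ Lg / 2 * (Qmax ^ 2 * (ρ * (c₁ * δ))) := by
      refine hT.trans ?_
      have h3 := mul_le_mul_of_nonneg_left hQsi2 (by linarith : (0:ℝ) ≤ Lg / 2)
      linarith
    calc |-(f (x + QL (s i)) - f x - ⟪gradient f x, QL (s i)⟫)
          - (y i - f (x + QL (s i))) + (y 0 - f x)|
        ≤ |f (x + QL (s i)) - f x - ⟪gradient f x, QL (s i)⟫|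
          + |y i - f (x + QL (s i))| + |y 0 - f x| := by
          have := abs_add_le (-(f (x + QL (s i)) - f x - ⟪gradient f x, QL (s i)⟫)
            - (y i - f (x + QL (s i)))) (y 0 - f x)
          have h2 := abs_sub (-(f (x + QL (s i)) - f x - ⟪gradient f x, QL (s i)⟫))
            (y i - f (x + QL (s i)))
          rw [abs_neg] at h2
          linarith
      _ ≤ c₁ * (Lg * Qmax ^ 2) * ρ * δ := by linarith
  -- L̂ is invertible
  have hUnit : IsUnit Lhat := by
    rw [← Matrix.linearIndependent_cols_iff_isUnit]
    have hsc : (ρ⁻¹ : ℝ) ≠ 0 := inv_ne_zero hρ0.ne'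
    have hli : LinearIndependent ℝ
        (fun b : Fin p => (WithLp.linearEquiv 2 ℝ (Fin p → ℝ)).toLinearMap (s b.succ - s 0)) :=
      haffind.map' _ (LinearEquiv.ker _)
    have hli2 := hli.units_smul (fun _ : Fin p => Units.mk0 (ρ⁻¹ : ℝ) hsc)
    convert hli2 using 1
    funext b
    funext c
    simp [hLhat, Matrix.transpose_apply, Pi.smul_apply, Units.smul_def, div_eq_inv_mul,
      WithLp.linearEquiv]
    rfl
  have hUnitT : IsUnit Lhatᵀ := (Matrix.isUnit_transpose _).mpr hUnit
  have hdetT : IsUnit Lhatᵀ.det := (Matrix.isUnit_iff_isUnit_det _).mp hUnitT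
  -- the vector E
  set E : EuclideanSpace ℝ (Fin p) := Matrix.toEuclideanLin Lhatᵀ w with hE
  have hEb : ∀ b : Fin p, E b = ⟪w, s b.succ⟫ / ρ := by
    intro b
    have : E b = ∑ c, Lhat c b * w c := by
      simp [hE, Matrix.toEuclideanLin_apply, Matrix.mulVec, dotProduct,
        Matrix.transpose_apply]
    rw [this]
    rw [real_inner_comm, PiLp.inner_apply]
    simp only [RCLike.inner_apply, conj_trivial]
    rw [Finset.sum_div]
    apply Finset.sum_congr rfl
    intro c _
    simp [hLhat, hs0]
    ring
  have hCnonneg : 0 ≤ c₁ * (Lg * Qmax ^ 2) * δ := by positivity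
  have hEbound : ‖E‖ ≤ Real.sqrt p * (c₁ * (Lg * Qmax ^ 2) * δ) := by
    have hEbb : ∀ b : Fin p, |E b| ≤ c₁ * (Lg * Qmax ^ 2) * δ := by
      intro b
      rw [hEb b, abs_div, abs_of_pos hρ0, div_le_iff₀ hρ0]
      calc |⟪w, s b.succ⟫| ≤ c₁ * (Lg * Qmax ^ 2) * ρ * δ := hkey b
        _ = c₁ * (Lg * Qmax ^ 2) * δ * ρ := by ring
    rw [EuclideanSpace.norm_eq]
    have hsum : (∑ b, ‖E b‖ ^ 2) ≤ (p : ℝ) * (c₁ * (Lg * Qmax ^ 2) * δ) ^ 2 := by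
      calc (∑ b, ‖E b‖ ^ 2) ≤ ∑ _b : Fin p, (c₁ * (Lg * Qmax ^ 2) * δ) ^ 2 := by
            apply Finset.sum_le_sum
            intro b _
            have := hEbb b
            rw [Real.norm_eq_abs]
            nlinarith [abs_nonneg (E b)]
        _ = (p : ℝ) * (c₁ * (Lg * Qmax ^ 2) * δ) ^ 2 := by
            simp [Finset.sum_const]
    calc Real.sqrt (∑ b, ‖E b‖ ^ 2)
        ≤ Real.sqrt ((p : ℝ) * (c₁ * (Lg * Qmax ^ 2) * δ) ^ 2) := Real.sqrt_le_sqrt hsum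
      _ = Real.sqrt p * (c₁ * (Lg * Qmax ^ 2) * δ) := by
          rw [Real.sqrt_mul (Nat.cast_nonneg p), Real.sqrt_sq hCnonneg]
  -- recover w from E
  have hwE : Matrix.toEuclideanLin Lhatᵀ⁻¹ E = w := by
    rw [hE]
    have h1 : Lhatᵀ⁻¹ * Lhatᵀ = 1 := Matrix.nonsing_inv_mul _ hdetT
    rw [Matrix.toEuclideanLin_apply, Matrix.toEuclideanLin_apply]
    simp [Matrix.mulVec_mulVec, h1]
  have hwbound : ‖w‖ ≤ matOpNorm Lhat⁻¹ * (Real.sqrt p * (c₁ * (Lg * Qmax ^ 2) * δ)) := by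
    calc ‖w‖ = ‖Matrix.toEuclideanLin Lhatᵀ⁻¹ E‖ := by rw [hwE]
      _ ≤ matOpNorm Lhatᵀ⁻¹ * ‖E‖ := matOpNorm_apply_le _ _
      _ = matOpNorm Lhat⁻¹ * ‖E‖ := by
          rw [← Matrix.transpose_nonsing_inv, matOpNorm_transpose]
      _ ≤ matOpNorm Lhat⁻¹ * (Real.sqrt p * (c₁ * (Lg * Qmax ^ 2) * δ)) := by
          exact mul_le_mul_of_nonneg_left hEbound (matOpNorm_nonneg _)
  -- assemble
  have hsplit : Matrix.toEuclideanLin Qᵀ (gradient f (x + QL t)) - a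
      = Matrix.toEuclideanLin Qᵀ (gradient f (x + QL t) - gradient f x) + w := by
    rw [hw, map_sub]
    abel
  have hfirst : ‖Matrix.toEuclideanLin Qᵀ (gradient f (x + QL t) - gradient f x)‖
      ≤ Lg * Qmax ^ 2 * δ := by
    calc ‖Matrix.toEuclideanLin Qᵀ (gradient f (x + QL t) - gradient f x)‖
        ≤ Qmax * ‖gradient f (x + QL t) - gradient f x‖ := hQtv _
      _ ≤ Qmax * (Lg * ‖(x + QL t) - x‖) := by
          exact mul_le_mul_of_nonneg_left (hlip _ _) hQmaxpos.le
      _ = Qmax * (Lg * ‖QL t‖) := by rw [add_sub_cancel_left]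
      _ ≤ Lg * Qmax ^ 2 * δ := by
          have h1 : ‖QL t‖ ≤ Qmax * δ :=
            (hQv t).trans (mul_le_mul_of_nonneg_left ht hQmaxpos.le)
          have h2 := mul_le_mul_of_nonneg_left h1 (mul_nonneg hQmaxpos.le hLg0)
          nlinarith [h2]
  rw [hsplit]
  calc ‖Matrix.toEuclideanLin Qᵀ (gradient f (x + QL t) - gradient f x) + w‖
      ≤ ‖Matrix.toEuclideanLin Qᵀ (gradient f (x + QL t) - gradient f x)‖ + ‖w‖ :=
        norm_add_le _ _
    _ ≤ Lg * Qmax ^ 2 * δ + matOpNorm Lhat⁻¹ * (Real.sqrt p * (c₁ * (Lg * Qmax ^ 2) * δ)) := by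
        exact add_le_add hfirst hwbound
    _ = (1 + c₁ * Real.sqrt p * matOpNorm Lhat⁻¹) * Lg * Qmax ^ 2 * δ := by ring
end

section
/- Let f : ℝⁿ → ℝ be differentiable, Q ∈ ℝ^{n×p}, x ∈ ℝⁿ, δ > 0, and let m̂(s) = c + ĝᵀ s + (1/2) sᵀ Ĥ s be a quadratic model with ĝ ∈ ℝᵖ and symmetric Ĥ ∈ ℝ^{p×p} satisfying ‖Ĥ‖ ≤ κ_h for some κ_h ≥ 1. Suppose m̂ is a (κ_ef, κ_eg; Q)-fully linear model of f in B(x, δ; Q), and suppose the trial step s_k ∈ ℝᵖ with ‖s_k‖ ≤ δ satisfies the fraction-of-Cauchy-decrease condition m̂(0) − m̂(s_k) ≥ (κ_fcd/2) ‖ĝ‖ min{δ, ‖ĝ‖/max(‖Ĥ‖, 1)} for some κ_fcd ∈ (0,1]. If δ ≤ min{1/κ_h, κ_fcd/(8 κ_ef)} ‖ĝ‖, then f(x + Q s_k) − f(x) ≤ −(κ_fcd/4) ‖ĝ‖ δ. -/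
open MeasureTheory Matrix
open scoped RealInnerProductSpace

/-!
Full linearity gives `|f(x + Q s) - m̂(s)| ≤ κ_ef δ²` at both `s = 0` and `s = s_k`, so the actual
decrease of `f` is at least the model decrease minus `2 κ_ef δ²`. Since `δ ≤ ‖ĝ‖ / κ_h`, the
minimum in the Cauchy condition is attained at `δ`, so the model decreases by at least
`(κ_fcd/2) ‖ĝ‖ δ`; and `δ ≤ κ_fcd ‖ĝ‖ / (8 κ_ef)` makes the error `2 κ_ef δ²` at most half of that.
-/

theorem sub_le_sub_add_two_mul_of_abs_sub_le {a a' b b' ε : ℝ}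
    (ha : |a - a'| ≤ ε) (hb : |b - b'| ≤ ε) : b - a ≤ b' - a' + 2 * ε := by
  rw [abs_le] at ha hb
  linarith [ha.1, hb.2]

theorem min_div_max_one_eq_left {δ γ h κ : ℝ} (hγ : 0 ≤ γ) (hκ : 1 ≤ κ) (hh : h ≤ κ)
    (hδ : δ ≤ 1 / κ * γ) : min δ (γ / max h 1) = δ := by
  refine min_eq_left (hδ.trans ?_)
  rw [one_div_mul_eq_div]
  gcongr
  exact max_le hh hκ

theorem two_mul_mul_sq_le {κ μ γ δ : ℝ} (hκ : 0 < κ) (hδ : 0 ≤ δ)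
    (hδγ : δ ≤ μ / (8 * κ) * γ) : 2 * (κ * δ ^ 2) ≤ μ / 4 * γ * δ := calc
  2 * (κ * δ ^ 2) = (2 * κ * δ) * δ := by ring
  _ ≤ (2 * κ * (μ / (8 * κ) * γ)) * δ := by gcongr
  _ = μ / 4 * γ * δ := by field_simp; ring

theorem stmt_8_general {n p : ℕ} (f : EuclideanSpace ℝ (Fin n) → ℝ)
    (Q : Matrix (Fin n) (Fin p) ℝ) (x : EuclideanSpace ℝ (Fin n))
    (δ : ℝ) (hδ : 0 < δ)
    -- the quadratic model m̂(s) = c + ĝᵀ s + (1/2) sᵀ Ĥ s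
    (g : EuclideanSpace ℝ (Fin p)) (H : Matrix (Fin p) (Fin p) ℝ)
    (κh : ℝ) (hκh : 1 ≤ κh) (hH : matOpNorm H ≤ κh)
    (mhat : EuclideanSpace ℝ (Fin p) → ℝ)
    -- (κ_ef, κ_eg; Q)-full linearity of the model in B(x, δ; Q)
    (κef κeg : ℝ) (hκef : 0 < κef)
    (hfl : ∀ t : EuclideanSpace ℝ (Fin p), ‖t‖ ≤ δ →
      |f (x + Matrix.toEuclideanLin Q t) - mhat t| ≤ κef * δ ^ 2 ∧
      ‖Matrix.toEuclideanLin Qᵀ (gradient f (x + Matrix.toEuclideanLin Q t))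
          - (g + Matrix.toEuclideanLin H t)‖ ≤ κeg * δ)
    -- the trial step with the fraction-of-Cauchy-decrease property
    (sk : EuclideanSpace ℝ (Fin p)) (hsk : ‖sk‖ ≤ δ)
    (κfcd : ℝ)
    (hcauchy : mhat 0 - mhat sk
      ≥ κfcd / 2 * ‖g‖ * min δ (‖g‖ / max (matOpNorm H) 1))
    (hδsmall : δ ≤ min (1 / κh) (κfcd / (8 * κef)) * ‖g‖) :
    f (x + Matrix.toEuclideanLin Q sk) - f x ≤ -(κfcd / 4) * ‖g‖ * δ := by
  have hg : 0 ≤ ‖g‖ := norm_nonneg g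
  have hδκh : δ ≤ 1 / κh * ‖g‖ := hδsmall.trans (by gcongr; exact min_le_left _ _)
  have hδκef : δ ≤ κfcd / (8 * κef) * ‖g‖ := hδsmall.trans (by gcongr; exact min_le_right _ _)
  rw [min_div_max_one_eq_left hg hκh hH hδκh] at hcauchy
  have herr₀ : |f x - mhat 0| ≤ κef * δ ^ 2 := by
    simpa using (hfl 0 (by simpa using hδ.le)).1
  have hdiff := sub_le_sub_add_two_mul_of_abs_sub_le herr₀ (hfl sk hsk).1
  have hsmall := two_mul_mul_sq_le hκef hδ.le hδκef
  linarith

/-- **Lemma 4.3.** If the model is `(κ_ef, κ_eg; Q)`-fully linear and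
`δ ≤ min{1/κ_h, κ_fcd/(8 κ_ef)} ‖ĝ‖`, then the trial step decreases `f` by at least
`(κ_fcd/4) ‖ĝ‖ δ`. -/
theorem stmt_8 {n p : ℕ} (f : EuclideanSpace ℝ (Fin n) → ℝ) (hf : Differentiable ℝ f)
    (Q : Matrix (Fin n) (Fin p) ℝ) (x : EuclideanSpace ℝ (Fin n))
    (δ : ℝ) (hδ : 0 < δ)
    -- the quadratic model m̂(s) = c + ĝᵀ s + (1/2) sᵀ Ĥ s
    (c : ℝ) (g : EuclideanSpace ℝ (Fin p)) (H : Matrix (Fin p) (Fin p) ℝ)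
    (hHsymm : H.IsSymm) (κh : ℝ) (hκh : 1 ≤ κh) (hH : matOpNorm H ≤ κh)
    (mhat : EuclideanSpace ℝ (Fin p) → ℝ)
    (hmhat : ∀ t, mhat t = c + ⟪g, t⟫ + 1 / 2 * ⟪t, Matrix.toEuclideanLin H t⟫)
    -- (κ_ef, κ_eg; Q)-full linearity of the model in B(x, δ; Q)
    (κef κeg : ℝ) (hκef : 0 < κef) (hκeg : 0 < κeg)
    (hfl : ∀ t : EuclideanSpace ℝ (Fin p), ‖t‖ ≤ δ →
      |f (x + Matrix.toEuclideanLin Q t) - mhat t| ≤ κef * δ ^ 2 ∧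
      ‖Matrix.toEuclideanLin Qᵀ (gradient f (x + Matrix.toEuclideanLin Q t))
          - (g + Matrix.toEuclideanLin H t)‖ ≤ κeg * δ)
    -- the trial step with the fraction-of-Cauchy-decrease property
    (sk : EuclideanSpace ℝ (Fin p)) (hsk : ‖sk‖ ≤ δ)
    (κfcd : ℝ) (hκfcd : κfcd ∈ Set.Ioc (0:ℝ) 1)
    (hcauchy : mhat 0 - mhat sk
      ≥ κfcd / 2 * ‖g‖ * min δ (‖g‖ / max (matOpNorm H) 1))
    (hδsmall : δ ≤ min (1 / κh) (κfcd / (8 * κef)) * ‖g‖) :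
    f (x + Matrix.toEuclideanLin Q sk) - f x ≤ -(κfcd / 4) * ‖g‖ * δ :=
  stmt_8_general f Q x δ hδ g H κh hκh hH mhat κef κeg hκef hfl sk hsk κfcd hcauchy hδsmall
end

section
/- Let f : ℝⁿ → ℝ be differentiable, Q ∈ ℝ^{n×p}, x ∈ ℝⁿ, δ > 0, and let m̂(s) = c + ĝᵀ s + (1/2) sᵀ Ĥ s be a quadratic model with symmetric Ĥ satisfying ‖Ĥ‖ ≤ κ_h for some κ_h ≥ 1. Suppose m̂ is a (κ_ef, κ_eg; Q)-fully linear model of f in B(x, δ; Q), and the trial step s_k with ‖s_k‖ ≤ δ satisfies m̂(0) − m̂(s_k) ≥ (κ_fcd/2) ‖ĝ‖ min{δ, ‖ĝ‖/max(‖Ĥ‖, 1)} for some κ_fcd ∈ (0,1]. Define C₁ = (κ_fcd/4) · max{ κ_h/(κ_h + κ_eg), 8 κ_ef/(8 κ_ef + κ_fcd κ_eg) }. If δ ≤ min{ 1/(κ_h + κ_eg), 1/(8 κ_ef/κ_fcd + κ_eg) } ‖Qᵀ ∇f(x)‖, then f(x + Q s_k) − f(x) ≤ −C₁ ‖Qᵀ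 ∇f(x)‖ δ. -/
open MeasureTheory Matrix
open scoped RealInnerProductSpace

set_option maxHeartbeats 1000000 in
/-- **Lemma 4.4.** If the model is `(κ_ef, κ_eg; Q)`-fully linear and `δ` is small
compared with `‖Qᵀ ∇f(x)‖`, then the trial step decreases `f` by at least
`C₁ ‖Qᵀ ∇f(x)‖ δ`. -/
theorem stmt_9 {n p : ℕ} (f : EuclideanSpace ℝ (Fin n) → ℝ) (hf : Differentiable ℝ f)
    (Q : Matrix (Fin n) (Fin p) ℝ) (x : EuclideanSpace ℝ (Fin n))
    (δ : ℝ) (hδ : 0 < δ)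
    -- the quadratic model m̂(s) = c + ĝᵀ s + (1/2) sᵀ Ĥ s
    (c : ℝ) (g : EuclideanSpace ℝ (Fin p)) (H : Matrix (Fin p) (Fin p) ℝ)
    (hHsymm : H.IsSymm) (κh : ℝ) (hκh : 1 ≤ κh) (hH : matOpNorm H ≤ κh)
    (mhat : EuclideanSpace ℝ (Fin p) → ℝ)
    (hmhat : ∀ t, mhat t = c + ⟪g, t⟫ + 1 / 2 * ⟪t, Matrix.toEuclideanLin H t⟫)
    -- (κ_ef, κ_eg; Q)-full linearity of the model in B(x, δ; Q)
    (κef κeg : ℝ) (hκef : 0 < κef) (hκeg : 0 < κeg)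
    (hfl : ∀ t : EuclideanSpace ℝ (Fin p), ‖t‖ ≤ δ →
      |f (x + Matrix.toEuclideanLin Q t) - mhat t| ≤ κef * δ ^ 2 ∧
      ‖Matrix.toEuclideanLin Qᵀ (gradient f (x + Matrix.toEuclideanLin Q t))
          - (g + Matrix.toEuclideanLin H t)‖ ≤ κeg * δ)
    -- the trial step with the fraction-of-Cauchy-decrease property
    (sk : EuclideanSpace ℝ (Fin p)) (hsk : ‖sk‖ ≤ δ)
    (κfcd : ℝ) (hκfcd : κfcd ∈ Set.Ioc (0:ℝ) 1)
    (hcauchy : mhat 0 - mhat sk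
      ≥ κfcd / 2 * ‖g‖ * min δ (‖g‖ / max (matOpNorm H) 1))
    (hδsmall : δ ≤ min (1 / (κh + κeg)) (1 / (8 * κef / κfcd + κeg))
        * ‖Matrix.toEuclideanLin Qᵀ (gradient f x)‖) :
    f (x + Matrix.toEuclideanLin Q sk) - f x
      ≤ -(κfcd / 4 * max (κh / (κh + κeg)) (8 * κef / (8 * κef + κfcd * κeg)))
        * ‖Matrix.toEuclideanLin Qᵀ (gradient f x)‖ * δ := by
  obtain ⟨hκfcd0, hκfcd1⟩ := hκfcd
  set G := ‖Matrix.toEuclideanLin Qᵀ (gradient f x)‖ with hGdef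
  have hG0 : (0:ℝ) ≤ G := norm_nonneg _
  have ha1 : (0:ℝ) < κh + κeg := by linarith
  have ha2 : (0:ℝ) < 8 * κef / κfcd + κeg := by positivity
  -- the two smallness conditions
  have hδ1 : δ * (κh + κeg) ≤ G := by
    have h := hδsmall.trans (mul_le_mul_of_nonneg_right (min_le_left _ _) hG0)
    rw [div_mul_eq_mul_div, one_mul] at h
    calc δ * (κh + κeg) ≤ (G / (κh + κeg)) * (κh + κeg) :=
          mul_le_mul_of_nonneg_right h ha1.le
      _ = G := div_mul_cancel₀ _ ha1.ne'
  have hδ2 : δ * (8 * κef / κfcd + κeg) ≤ G := by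
    have h := hδsmall.trans (mul_le_mul_of_nonneg_right (min_le_right _ _) hG0)
    rw [div_mul_eq_mul_div, one_mul] at h
    calc δ * (8 * κef / κfcd + κeg) ≤ (G / (8 * κef / κfcd + κeg)) * (8 * κef / κfcd + κeg) :=
          mul_le_mul_of_nonneg_right h ha2.le
      _ = G := div_mul_cancel₀ _ ha2.ne'
  -- full linearity at 0
  have h0 := hfl 0 (by simpa using hδ.le)
  rw [map_zero, map_zero, add_zero, add_zero] at h0
  obtain ⟨h0f, h0g⟩ := h0
  -- ‖g‖ ≥ G - κeg δ
  have hgG : G - κeg * δ ≤ ‖g‖ := by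
    have h := norm_sub_norm_le (Matrix.toEuclideanLin Qᵀ (gradient f x)) g
    have := h.trans h0g
    linarith
  have hgbig : κh * δ ≤ ‖g‖ := by nlinarith
  -- the min in the Cauchy decrease equals δ
  have hmax1 : (0:ℝ) < max (matOpNorm H) 1 := lt_of_lt_of_le one_pos (le_max_right _ _)
  have hmaxκh : max (matOpNorm H) 1 ≤ κh := max_le hH hκh
  have hmin : min δ (‖g‖ / max (matOpNorm H) 1) = δ := by
    apply min_eq_left
    rw [le_div_iff₀ hmax1]
    calc δ * max (matOpNorm H) 1 ≤ δ * κh := mul_le_mul_of_nonneg_left hmaxκh hδ.le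
      _ = κh * δ := mul_comm _ _
      _ ≤ ‖g‖ := hgbig
  rw [hmin] at hcauchy
  -- fully linear at sk
  have hskf := (hfl sk hsk).1
  -- key arithmetic inequality
  have hE : (0:ℝ) < 8 * κef + κfcd * κeg := by positivity
  have hkey : (2 * κef + κfcd * κeg / 2) * δ
      ≤ (κfcd / 2 - κfcd / 4 * max (κh / (κh + κeg)) (8 * κef / (8 * κef + κfcd * κeg))) * G := by
    rcases le_total (κfcd * κh) (8 * κef) with hcase | hcase
    · have hAB : κh / (κh + κeg) ≤ 8 * κef / (8 * κef + κfcd * κeg) := by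
        rw [div_le_div_iff₀ ha1 hE]; nlinarith
      rw [max_eq_right hAB]
      have hid : κfcd * (8 * κef / κfcd + κeg) = 8 * κef + κfcd * κeg := by
        field_simp
      have h2' : δ * (8 * κef + κfcd * κeg) ≤ κfcd * G := by
        have h := mul_le_mul_of_nonneg_left hδ2 hκfcd0.le
        calc δ * (8 * κef + κfcd * κeg) = δ * (κfcd * (8 * κef / κfcd + κeg)) := by rw [hid]
          _ = κfcd * (δ * (8 * κef / κfcd + κeg)) := by ring
          _ ≤ κfcd * G := h
      have hco : κfcd / 2 - κfcd / 4 * (8 * κef / (8 * κef + κfcd * κeg))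
          = κfcd * (2 * κef + κfcd * κeg / 2) / (8 * κef + κfcd * κeg) := by
        field_simp; ring
      rw [hco, div_mul_eq_mul_div, le_div_iff₀ hE]
      calc (2 * κef + κfcd * κeg / 2) * δ * (8 * κef + κfcd * κeg)
          = (2 * κef + κfcd * κeg / 2) * (δ * (8 * κef + κfcd * κeg)) := by ring
        _ ≤ (2 * κef + κfcd * κeg / 2) * (κfcd * G) :=
            mul_le_mul_of_nonneg_left h2' (by positivity)
        _ = κfcd * (2 * κef + κfcd * κeg / 2) * G := by ring
    · have hAB : 8 * κef / (8 * κef + κfcd * κeg) ≤ κh / (κh + κeg) := by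
        rw [div_le_div_iff₀ hE ha1]; nlinarith
      rw [max_eq_left hAB]
      have hco : κfcd / 2 - κfcd / 4 * (κh / (κh + κeg))
          = κfcd * (κh + 2 * κeg) / (4 * (κh + κeg)) := by
        field_simp; ring
      rw [hco, div_mul_eq_mul_div, le_div_iff₀ (by positivity : (0:ℝ) < 4 * (κh + κeg))]
      have hc4 : (2 * κef + κfcd * κeg / 2) * 4 ≤ κfcd * (κh + 2 * κeg) := by nlinarith
      calc (2 * κef + κfcd * κeg / 2) * δ * (4 * (κh + κeg))
          = ((2 * κef + κfcd * κeg / 2) * 4) * (δ * (κh + κeg)) := by ring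
        _ ≤ (κfcd * (κh + 2 * κeg)) * (δ * (κh + κeg)) :=
            mul_le_mul_of_nonneg_right hc4 (by positivity)
        _ ≤ κfcd * (κh + 2 * κeg) * G :=
            mul_le_mul_of_nonneg_left hδ1 (by positivity)
  -- assemble
  rw [abs_le] at hskf h0f
  have hgd : κfcd / 2 * (G - κeg * δ) * δ ≤ κfcd / 2 * ‖g‖ * δ :=
    mul_le_mul_of_nonneg_right
      (mul_le_mul_of_nonneg_left hgG (by positivity : (0:ℝ) ≤ κfcd / 2)) hδ.le
  have hkey2 : (2 * κef + κfcd * κeg / 2) * δ * δ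
      ≤ (κfcd / 2 - κfcd / 4 * max (κh / (κh + κeg)) (8 * κef / (8 * κef + κfcd * κeg))) * G * δ :=
    mul_le_mul_of_nonneg_right hkey hδ.le
  calc f (x + Matrix.toEuclideanLin Q sk) - f x
      ≤ 2 * κef * δ ^ 2 - κfcd / 2 * ‖g‖ * δ := by linarith [hskf.1, hskf.2, h0f.1, h0f.2, hcauchy]
    _ ≤ 2 * κef * δ ^ 2 - κfcd / 2 * (G - κeg * δ) * δ := by linarith [hgd]
    _ = (2 * κef + κfcd * κeg / 2) * δ * δ - κfcd / 2 * G * δ := by ring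
    _ ≤ (κfcd / 2 - κfcd / 4 * max (κh / (κh + κeg)) (8 * κef / (8 * κef + κfcd * κeg))) * G * δ
        - κfcd / 2 * G * δ := by linarith [hkey2]
    _ = -(κfcd / 4 * max (κh / (κh + κeg)) (8 * κef / (8 * κef + κfcd * κeg))) * G * δ := by ring
end

section
/- Let f : ℝⁿ → ℝ be differentiable, Q ∈ ℝ^{n×p}, x ∈ ℝⁿ, δ > 0, and let m̂(s) = c + ĝᵀ s + (1/2) sᵀ Ĥ s be a quadratic model with symmetric Ĥ satisfying ‖Ĥ‖ ≤ κ_h for some κ_h ≥ 1, and suppose the trial step s_k with ‖s_k‖ ≤ δ satisfies m̂(0) − m̂(s_k) ≥ (κ_fcd/2) ‖ĝ‖ min{δ, ‖ĝ‖/max(‖Ĥ‖, 1)} for some κ_fcd ∈ (0,1]. Let η₁ ∈ (0,1), η₂ > 0, and suppose the estimates f⁰, fˢ are ε_f-accurate for f(x) and f(x + Q s_k) with radius δ, where 0 < ε_f < (1/4) η₁ η₂ κ_fcd min{ η₂/κ_h, 1 }. If the iteration is successful, i.e., ρ := (f⁰ − fˢ)/(m̂(0) − m̂(s_k)) ≥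 η₁ and ‖ĝ‖ ≥ η₂ δ, then f(x + Q s_k) − f(x) ≤ −C₂ δ², where C₂ = (1/2) η₁ η₂ κ_fcd min{ η₂/κ_h, 1 } − 2 ε_f > 0. -/
open MeasureTheory Matrix
open scoped RealInnerProductSpace

/-!
The Cauchy-decrease condition together with `‖ĝ‖ ≥ η₂ δ` and `max(‖Ĥ‖, 1) ≤ κ_h` bounds the
model decrease below by `(κ_fcd/2) η₂ min{η₂/κ_h, 1} δ²`. Success (`ρ ≥ η₁`) transfers a fraction
`η₁` of this to the estimated decrease `f⁰ - fˢ`, and the two estimates each move the true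
decrease by at most `ε_f δ²`.
-/

lemma mul_min_le_mul_min_of_mul_le {κ η δ G M κh : ℝ} (hκ : 0 ≤ κ) (hδ : 0 ≤ δ) (hη : 0 ≤ η)
    (hG : η * δ ≤ G) (hM : 0 < M) (hMκ : M ≤ κh) :
    κ / 2 * η * min (η / κh) 1 * δ ^ 2 ≤ κ / 2 * G * min δ (G / M) := by
  have hκh : 0 < κh := hM.trans_le hMκ
  have hmin : 0 ≤ min (η / κh) 1 := le_min (by positivity) zero_le_one
  have hmin_le : δ * min (η / κh) 1 ≤ min δ (G / M) := by
    refine le_min (mul_le_of_le_one_right hδ (min_le_right _ _)) ?_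
    calc δ * min (η / κh) 1 ≤ δ * (η / κh) := mul_le_mul_of_nonneg_left (min_le_left _ _) hδ
      _ = η * δ / κh := by ring
      _ ≤ G / κh := by gcongr
      _ ≤ G / M := div_le_div_of_nonneg_left ((mul_nonneg hη hδ).trans hG) hM hMκ
  calc κ / 2 * η * min (η / κh) 1 * δ ^ 2 = κ / 2 * (η * δ) * (δ * min (η / κh) 1) := by ring
    _ ≤ κ / 2 * G * min δ (G / M) := by
      have hG0 : 0 ≤ G := (mul_nonneg hη hδ).trans hG
      gcongr

lemma sub_le_of_div_ge_of_abs_sub_le {f0 fs a b D η e : ℝ} (hD : 0 < D)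
    (hρ : (f0 - fs) / D ≥ η) (ha : |f0 - a| ≤ e) (hb : |fs - b| ≤ e) :
    b - a ≤ -(η * D) + 2 * e := by
  have hdec : η * D ≤ f0 - fs := (le_div_iff₀ hD).mp hρ
  linarith [(abs_le.mp ha).2, (abs_le.mp hb).1]

theorem stmt_11_general {n p : ℕ} (f : EuclideanSpace ℝ (Fin n) → ℝ)
    (Q : Matrix (Fin n) (Fin p) ℝ) (x : EuclideanSpace ℝ (Fin n))
    (δ : ℝ) (hδ : 0 < δ)
    -- the quadratic model m̂(s) = c + ĝᵀ s + (1/2) sᵀ Ĥ s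
    (g : EuclideanSpace ℝ (Fin p)) (H : Matrix (Fin p) (Fin p) ℝ)
    (κh : ℝ) (hκh : 1 ≤ κh) (hH : matOpNorm H ≤ κh)
    (mhat : EuclideanSpace ℝ (Fin p) → ℝ)
    -- the trial step with the fraction-of-Cauchy-decrease property
    (sk : EuclideanSpace ℝ (Fin p))
    (κfcd : ℝ) (hκfcd : κfcd ∈ Set.Ioc (0:ℝ) 1)
    (hcauchy : mhat 0 - mhat sk
      ≥ κfcd / 2 * ‖g‖ * min δ (‖g‖ / max (matOpNorm H) 1))
    (η₁ η₂ : ℝ) (hη₁ : η₁ ∈ Set.Ioo (0:ℝ) 1) (hη₂ : 0 < η₂)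
    -- ε_f-accurate estimates of f(x) and f(x + Q s_k)
    (εf : ℝ)
    (hεf : εf < 1 / 4 * η₁ * η₂ * κfcd * min (η₂ / κh) 1)
    (f0 fs : ℝ)
    (hf0 : |f0 - f x| ≤ εf * δ ^ 2)
    (hfs : |fs - f (x + Matrix.toEuclideanLin Q sk)| ≤ εf * δ ^ 2)
    -- the iteration is successful
    (hρ : (f0 - fs) / (mhat 0 - mhat sk) ≥ η₁) (hg : ‖g‖ ≥ η₂ * δ) :
    0 < 1 / 2 * η₁ * η₂ * κfcd * min (η₂ / κh) 1 - 2 * εf ∧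
    f (x + Matrix.toEuclideanLin Q sk) - f x
      ≤ -(1 / 2 * η₁ * η₂ * κfcd * min (η₂ / κh) 1 - 2 * εf) * δ ^ 2 := by
  have hmodel : κfcd / 2 * η₂ * min (η₂ / κh) 1 * δ ^ 2 ≤ mhat 0 - mhat sk :=
    (mul_min_le_mul_min_of_mul_le hκfcd.1.le hδ.le hη₂.le hg
      (zero_lt_one.trans_le (le_max_right _ _)) (max_le hH hκh)).trans hcauchy
  have hmin : 0 < min (η₂ / κh) 1 := lt_min (div_pos hη₂ (zero_lt_one.trans_le hκh)) one_pos
  have hmodel_pos : 0 < mhat 0 - mhat sk :=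
    lt_of_lt_of_le (by have := hκfcd.1; positivity) hmodel
  have htrue := sub_le_of_div_ge_of_abs_sub_le hmodel_pos hρ hf0 hfs
  have hfrac := mul_le_mul_of_nonneg_left hmodel hη₁.1.le
  constructor
  · linarith
  · linarith

/-- **Lemma 4.6.** If the estimates are sufficiently accurate and the iteration is
successful, then `f` decreases by at least `C₂ δ²`, where
`C₂ = (1/2) η₁ η₂ κ_fcd min{η₂/κ_h, 1} - 2 ε_f > 0`. -/
theorem stmt_11 {n p : ℕ} (f : EuclideanSpace ℝ (Fin n) → ℝ) (hf : Differentiable ℝ f)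
    (Q : Matrix (Fin n) (Fin p) ℝ) (x : EuclideanSpace ℝ (Fin n))
    (δ : ℝ) (hδ : 0 < δ)
    -- the quadratic model m̂(s) = c + ĝᵀ s + (1/2) sᵀ Ĥ s
    (c : ℝ) (g : EuclideanSpace ℝ (Fin p)) (H : Matrix (Fin p) (Fin p) ℝ)
    (hHsymm : H.IsSymm) (κh : ℝ) (hκh : 1 ≤ κh) (hH : matOpNorm H ≤ κh)
    (mhat : EuclideanSpace ℝ (Fin p) → ℝ)
    (hmhat : ∀ t, mhat t = c + ⟪g, t⟫ + 1 / 2 * ⟪t, Matrix.toEuclideanLin H t⟫)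
    -- the trial step with the fraction-of-Cauchy-decrease property
    (sk : EuclideanSpace ℝ (Fin p)) (hsk : ‖sk‖ ≤ δ)
    (κfcd : ℝ) (hκfcd : κfcd ∈ Set.Ioc (0:ℝ) 1)
    (hcauchy : mhat 0 - mhat sk
      ≥ κfcd / 2 * ‖g‖ * min δ (‖g‖ / max (matOpNorm H) 1))
    (η₁ η₂ : ℝ) (hη₁ : η₁ ∈ Set.Ioo (0:ℝ) 1) (hη₂ : 0 < η₂)
    -- ε_f-accurate estimates of f(x) and f(x + Q s_k)
    (εf : ℝ) (hεf0 : 0 < εf)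
    (hεf : εf < 1 / 4 * η₁ * η₂ * κfcd * min (η₂ / κh) 1)
    (f0 fs : ℝ)
    (hf0 : |f0 - f x| ≤ εf * δ ^ 2)
    (hfs : |fs - f (x + Matrix.toEuclideanLin Q sk)| ≤ εf * δ ^ 2)
    -- the iteration is successful
    (hρ : (f0 - fs) / (mhat 0 - mhat sk) ≥ η₁) (hg : ‖g‖ ≥ η₂ * δ) :
    0 < 1 / 2 * η₁ * η₂ * κfcd * min (η₂ / κh) 1 - 2 * εf ∧
    f (x + Matrix.toEuclideanLin Q sk) - f x
      ≤ -(1 / 2 * η₁ * η₂ * κfcd * min (η₂ / κh) 1 - 2 * εf) * δ ^ 2 :=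
  stmt_11_general f Q x δ hδ g H κh hκh hH mhat sk κfcd hκfcd hcauchy η₁ η₂ hη₁ hη₂ εf hεf f0 fs hf0
    hfs hρ hg
end

section
/- Let f : ℝⁿ → ℝ be differentiable with L_g-Lipschitz continuous gradient, let Q ∈ ℝ^{n×p} satisfy ‖Q‖ ≤ Q_max, let x ∈ ℝⁿ, δ > 0, and let s ∈ ℝᵖ with ‖s‖ ≤ δ. Let ζ > 0 and suppose ‖Qᵀ ∇f(x)‖ ≥ ζ δ. Then f(x + Q s) − f(x) ≤ C₃(ζ) ‖Qᵀ ∇f(x)‖ δ, where C₃(ζ) = 1 + (3 L_g)/(2 ζ) Q_max². -/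
open MeasureTheory Matrix
open scoped RealInnerProductSpace

/-- **Lemma 4.7.** If `‖Qᵀ ∇f(x)‖ ≥ ζ δ`, then for any step `s` with `‖s‖ ≤ δ`, the
increase in `f` is at most `C₃(ζ) ‖Qᵀ ∇f(x)‖ δ` with `C₃(ζ) = 1 + (3 L_g)/(2 ζ) Q_max²`. -/
theorem stmt_12 {n p : ℕ} (f : EuclideanSpace ℝ (Fin n) → ℝ) (hf : Differentiable ℝ f)
    (Lg : ℝ)
    (hlip : ∀ y z : EuclideanSpace ℝ (Fin n),
      ‖gradient f y - gradient f z‖ ≤ Lg * ‖y - z‖)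
    (Q : Matrix (Fin n) (Fin p) ℝ) (Qmax : ℝ) (hQmaxpos : 0 < Qmax)
    (hQ : matOpNorm Q ≤ Qmax)
    (x : EuclideanSpace ℝ (Fin n)) (δ : ℝ) (hδ : 0 < δ)
    (s : EuclideanSpace ℝ (Fin p)) (hs : ‖s‖ ≤ δ)
    (ζ : ℝ) (hζ : 0 < ζ)
    (hgrad : ‖Matrix.toEuclideanLin Qᵀ (gradient f x)‖ ≥ ζ * δ) :
    f (x + Matrix.toEuclideanLin Q s) - f x
      ≤ (1 + 3 * Lg / (2 * ζ) * Qmax ^ 2)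
        * ‖Matrix.toEuclideanLin Qᵀ (gradient f x)‖ * δ := by
  set g := gradient f x with hg
  set N := ‖Matrix.toEuclideanLin Qᵀ g‖ with hN
  rcases Nat.eq_zero_or_pos n with hn | hn
  · subst hn
    have hg0 : g = 0 := Subsingleton.elim _ _
    have hN0 : N = 0 := by rw [hN, hg0, map_zero, norm_zero]
    rw [hN0] at hgrad
    nlinarith [mul_pos hζ hδ]
  -- Lg ≥ 0
  have hLg : 0 ≤ Lg := by
    have h1 := hlip (EuclideanSpace.single ⟨0, hn⟩ (1:ℝ)) 0
    have h2 : ‖(EuclideanSpace.single ⟨0, hn⟩ (1:ℝ)) - (0 : EuclideanSpace ℝ (Fin n))‖ = 1 := by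
      simp
    rw [h2, mul_one] at h1
    exact le_trans (norm_nonneg _) h1
  set v := Matrix.toEuclideanLin Q s with hv
  -- operator norm bound
  have hvnorm : ‖v‖ ≤ Qmax * δ := by
    have := (LinearMap.toContinuousLinearMap (Matrix.toEuclideanLin Q)).le_opNorm s
    have h3 : (LinearMap.toContinuousLinearMap (Matrix.toEuclideanLin Q)) s = v := rfl
    rw [h3] at this
    calc ‖v‖ ≤ matOpNorm Q * ‖s‖ := this
      _ ≤ Qmax * δ := by
          apply mul_le_mul hQ hs (norm_nonneg _) hQmaxpos.le
  -- MVT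
  have hline : ∀ t : ℝ, HasDerivAt (fun t : ℝ => f (x + t • v))
      ⟪gradient f (x + t • v), v⟫ t := by
    intro t
    have h1 : HasDerivAt (fun t : ℝ => x + t • v) v t := by
      simpa using ((hasDerivAt_id t).smul_const v).const_add x
    have h2 := ((hf (x + t • v)).hasGradientAt.hasFDerivAt).comp_hasDerivAt t h1
    exact h2
  obtain ⟨c, hc, hceq⟩ := exists_hasDerivAt_eq_slope (fun t : ℝ => f (x + t • v))
      (fun t => ⟪gradient f (x + t • v), v⟫) one_pos
      (fun t _ => (hline t).continuousAt.continuousWithinAt) (fun t _ => hline t)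
  simp only [one_smul, zero_smul, add_zero] at hceq
  rw [sub_zero, div_one] at hceq
  -- inner product adjoint identity
  have hadj : ∀ w : EuclideanSpace ℝ (Fin n), ⟪w, v⟫ = ⟪Matrix.toEuclideanLin Qᵀ w, s⟫ := by
    intro w
    have : (Qᵀ : Matrix (Fin p) (Fin n) ℝ) = Qᴴ := by
      ext i j; simp [Matrix.conjTranspose]
    rw [this, Matrix.toEuclideanLin_conjTranspose_eq_adjoint, LinearMap.adjoint_inner_left,
      real_inner_comm]
  have key : f (x + v) - f x ≤ ⟪g, v⟫ + Lg * ‖v‖ ^ 2 := by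
    rw [← hceq]
    have : ⟪gradient f (x + c • v), v⟫ = ⟪g, v⟫ + ⟪gradient f (x + c • v) - g, v⟫ := by
      rw [inner_sub_left]; ring
    rw [this]
    gcongr _ + ?_
    calc ⟪gradient f (x + c • v) - g, v⟫ ≤ ‖gradient f (x + c • v) - g‖ * ‖v‖ :=
          real_inner_le_norm _ _
      _ ≤ (Lg * ‖(x + c • v) - x‖) * ‖v‖ := by
          apply mul_le_mul_of_nonneg_right (hlip _ _) (norm_nonneg _)
      _ ≤ Lg * ‖v‖ ^ 2 := by
          have : ‖(x + c • v) - x‖ = |c| * ‖v‖ := by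
            simp [norm_smul, abs_of_nonneg hc.1.le]
          rw [this]
          have hc1 : |c| ≤ 1 := by
            rw [abs_of_nonneg hc.1.le]; exact hc.2.le
          calc Lg * (|c| * ‖v‖) * ‖v‖ = |c| * (Lg * ‖v‖ ^ 2) := by ring
            _ ≤ 1 * (Lg * ‖v‖ ^ 2) := by
                apply mul_le_mul_of_nonneg_right hc1
                positivity
            _ = Lg * ‖v‖ ^ 2 := one_mul _
  have hNpos : 0 < N := lt_of_lt_of_le (mul_pos hζ hδ) hgrad
  have hδN : δ ≤ N / ζ := by
    rw [le_div_iff₀ hζ]; linarith [hgrad]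
  have h1 : ⟪g, v⟫ ≤ N * δ := by
    rw [hadj g]
    calc ⟪Matrix.toEuclideanLin Qᵀ g, s⟫ ≤ N * ‖s‖ := real_inner_le_norm _ _
      _ ≤ N * δ := by nlinarith
  have h2 : Lg * ‖v‖ ^ 2 ≤ Lg * (Qmax * δ) ^ 2 := by
    apply mul_le_mul_of_nonneg_left _ hLg
    exact pow_le_pow_left₀ (norm_nonneg v) hvnorm 2
  have h3 : Lg * (Qmax * δ) ^ 2 ≤ Lg / ζ * Qmax ^ 2 * N * δ := by
    have : Lg * (Qmax * δ) ^ 2 = (Lg * Qmax ^ 2 * δ) * δ := by ring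
    rw [this]
    have h4 : Lg / ζ * Qmax ^ 2 * N * δ = (Lg * Qmax ^ 2 * (N / ζ)) * δ := by ring
    rw [h4]
    apply mul_le_mul_of_nonneg_right _ hδ.le
    apply mul_le_mul_of_nonneg_left hδN
    exact mul_nonneg hLg (sq_nonneg _)
  have hfin : Lg / ζ * Qmax ^ 2 * N * δ ≤ 3 * Lg / (2 * ζ) * Qmax ^ 2 * N * δ := by
    have hdd : Lg / ζ ≤ 3 * Lg / (2 * ζ) := by
      rw [div_le_div_iff₀ hζ (by linarith)]
      nlinarith
    have hq : (0:ℝ) ≤ Qmax ^ 2 * (N * δ) :=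
      mul_nonneg (sq_nonneg _) (mul_nonneg hNpos.le hδ.le)
    calc Lg / ζ * Qmax ^ 2 * N * δ = (Lg / ζ) * (Qmax ^ 2 * (N * δ)) := by ring
      _ ≤ (3 * Lg / (2 * ζ)) * (Qmax ^ 2 * (N * δ)) := mul_le_mul_of_nonneg_right hdd hq
      _ = 3 * Lg / (2 * ζ) * Qmax ^ 2 * N * δ := by ring
  calc f (x + v) - f x ≤ ⟪g, v⟫ + Lg * ‖v‖ ^ 2 := key
    _ ≤ N * δ + 3 * Lg / (2 * ζ) * Qmax ^ 2 * N * δ := by linarith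
    _ = (1 + 3 * Lg / (2 * ζ) * Qmax ^ 2) * N * δ := by ring
end

section
/- Let (Ω, F, P) be a probability space with a filtration (F_k)_{k∈ℕ}. Let (φ_k)_{k∈ℕ} be a sequence of nonnegative integrable random variables and (δ_k)_{k∈ℕ} a sequence of nonnegative random variables, both adapted to (F_k), and let ϱ > 0 be a constant. Suppose that for every k ∈ ℕ, E[φ_{k+1} − φ_k | F_k] ≤ −ϱ δ_k² almost surely. Then Σ_{k=0}^∞ δ_k² < ∞ almost surely. -/
open MeasureTheory Filter

/-- **Theorem 4.15 (zeroth-order convergence).** If the nonnegative adapted process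
`(φ_k)` satisfies `E[φ_{k+1} - φ_k | F_k] ≤ -ϱ δ_k²` for every `k`, then
`∑_k δ_k² < ∞` almost surely. -/
theorem stmt_16 {Ω : Type*} [mΩ : MeasurableSpace Ω] (μ : Measure Ω)
    [IsProbabilityMeasure μ]
    (ℱ : Filtration ℕ mΩ)
    (φ δ : ℕ → Ω → ℝ)
    (hφ_adapted : Adapted ℱ φ) (hδ_adapted : Adapted ℱ δ)
    (hφ_nonneg : ∀ k ω, 0 ≤ φ k ω) (hδ_nonneg : ∀ k ω, 0 ≤ δ k ω)
    (hφ_int : ∀ k, Integrable (φ k) μ)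
    (ϱ : ℝ) (hϱ : 0 < ϱ)
    (hdec : ∀ k, ∀ᵐ ω ∂μ,
      (μ[fun ω' => φ (k + 1) ω' - φ k ω' | ℱ k]) ω ≤ -ϱ * (δ k ω) ^ 2) :
    ∀ᵐ ω ∂μ, Summable fun k => (δ k ω) ^ 2 := by
  -- δ k ^ 2 is integrable
  have hδsq_meas : ∀ k, StronglyMeasurable[ℱ k] (fun ω => (δ k ω) ^ 2) := fun k =>
    ((hδ_adapted k).pow_const 2).stronglyMeasurable
  have hδsq_int : ∀ k, Integrable (fun ω => (δ k ω) ^ 2) μ := by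
    intro k
    refine Integrable.mono' ((integrable_condExp (m := ℱ k)
      (f := fun ω' => φ (k + 1) ω' - φ k ω')).smul (-(1/ϱ)))
      ((hδsq_meas k).mono (ℱ.le k)).aestronglyMeasurable ?_
    filter_upwards [hdec k] with ω hω
    rw [Real.norm_eq_abs, abs_of_nonneg (sq_nonneg _)]
    have : ϱ * δ k ω ^ 2 ≤ -(μ[fun ω' => φ (k + 1) ω' - φ k ω'|ℱ k]) ω := by linarith
    calc δ k ω ^ 2 = (1/ϱ) * (ϱ * δ k ω ^ 2) := by field_simp
      _ ≤ (1/ϱ) * (-(μ[fun ω' => φ (k + 1) ω' - φ k ω'|ℱ k]) ω) := by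
          exact mul_le_mul_of_nonneg_left this (by positivity)
      _ = (-(1/ϱ)) • (μ[fun ω' => φ (k + 1) ω' - φ k ω'|ℱ k]) ω := by
          simp [smul_eq_mul]
  -- the supermartingale
  set f : ℕ → Ω → ℝ := fun n ω => φ n ω + ϱ * ∑ k ∈ Finset.range n, (δ k ω) ^ 2 with hf_def
  have hf_adapted : Adapted ℱ f := by
    intro n
    refine (hφ_adapted n).add (StronglyMeasurable.measurable (StronglyMeasurable.const_smul ?_ ϱ))
    exact Finset.stronglyMeasurable_fun_sum _ fun k hk =>
      ((hδsq_meas k).mono (ℱ.mono (Finset.mem_range.mp hk).le))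
  have hf_int : ∀ n, Integrable (f n) μ := fun n =>
    (hφ_int n).add ((integrable_finset_sum _ fun k _ => hδsq_int k).smul ϱ)
  have hf_nonneg : ∀ n ω, 0 ≤ f n ω := fun n ω =>
    add_nonneg (hφ_nonneg n ω) (mul_nonneg hϱ.le
      (Finset.sum_nonneg fun k _ => sq_nonneg _))
  have hsuper : Supermartingale f ℱ μ := by
    refine supermartingale_nat hf_adapted.stronglyAdapted hf_int fun n => ?_
    have hsplit : f (n + 1) = (fun ω => (fun ω' => φ (n + 1) ω' - φ n ω') ω
        + (f n ω + ϱ * (δ n ω) ^ 2)) := by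
      funext ω
      simp only [hf_def, Finset.sum_range_succ]
      ring
    have hmeas2 : StronglyMeasurable[ℱ n] (fun ω => f n ω + ϱ * (δ n ω) ^ 2) :=
      (hf_adapted n).stronglyMeasurable.add ((hδsq_meas n).const_smul ϱ)
    have hint2 : Integrable (fun ω => f n ω + ϱ * (δ n ω) ^ 2) μ :=
      (hf_int n).add ((hδsq_int n).smul ϱ)
    have hintd : Integrable (fun ω' => φ (n + 1) ω' - φ n ω') μ :=
      (hφ_int (n + 1)).sub (hφ_int n)
    have hce : μ[f (n + 1)|ℱ n] =ᵐ[μ]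
        (fun ω => (μ[fun ω' => φ (n + 1) ω' - φ n ω'|ℱ n]) ω
          + (f n ω + ϱ * (δ n ω) ^ 2)) := by
      rw [hsplit]
      refine (condExp_add hintd hint2 (ℱ n)).trans ?_
      rw [condExp_of_stronglyMeasurable (ℱ.le n) hmeas2 hint2]
      exact Filter.Eventually.of_forall fun ω => rfl
    filter_upwards [hce, hdec n] with ω h1 h2
    rw [h1]
    nlinarith [sq_nonneg (δ n ω)]
  -- L¹ bound
  have hRbound : ∀ n, eLpNorm (f n) 1 μ ≤ ENNReal.ofReal (∫ ω, f 0 ω ∂μ) := by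
    intro n
    have hint_le : ∫ ω, f n ω ∂μ ≤ ∫ ω, f 0 ω ∂μ := by
      have := hsuper.setIntegral_le (Nat.zero_le n) (MeasurableSet.univ)
      simpa [setIntegral_univ] using this
    have : eLpNorm (f n) 1 μ = ENNReal.ofReal (∫ ω, f n ω ∂μ) := by
      rw [eLpNorm_one_eq_lintegral_enorm,
        ofReal_integral_eq_lintegral_ofReal (hf_int n)
          (Eventually.of_forall (hf_nonneg n))]
      congr 1
      funext ω
      exact Real.enorm_eq_ofReal (hf_nonneg n ω)
    rw [this]
    exact ENNReal.ofReal_le_ofReal hint_le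
  have hRbound' : ∀ n, eLpNorm ((-f) n) 1 μ ≤ (ENNReal.ofReal (∫ ω, f 0 ω ∂μ)).toNNReal := by
    intro n
    have := hRbound n
    rwa [Pi.neg_apply, eLpNorm_neg, ENNReal.coe_toNNReal ENNReal.ofReal_ne_top]
  have hconv := hsuper.neg.exists_ae_tendsto_of_bdd hRbound'
  filter_upwards [hconv] with ω hω
  obtain ⟨c, hc⟩ := hω
  have hc' : Tendsto (fun n => f n ω) atTop (nhds (-c)) := by
    have := hc.neg
    simpa using this
  obtain ⟨B, hB⟩ := hc'.bddAbove_range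
  refine summable_of_sum_range_le (c := B / ϱ) (fun k => sq_nonneg _) fun n => ?_
  have hfB : f n ω ≤ B := hB ⟨n, rfl⟩
  have : ϱ * ∑ k ∈ Finset.range n, (δ k ω) ^ 2 ≤ B := by
    have := hφ_nonneg n ω
    simp only [hf_def] at hfB
    linarith
  rw [le_div_iff₀ hϱ]
  linarith
end
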